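/- Let n_1,…,n_k ≥ 1, n = n_1 + ⋯ + n_k ≥ 2, and let g ≥ 1 divide every n_c. Let α be the canonical configuration and let f and P_g be the shift permutation and port assignment of Lemma 5. Then for every x : Fin n → ℕ → Bool compatible with α, every t ∈ ℕ and every i ∈ Fin n, g divides the cardinality of the consistency class {l ∈ Fin n : K^{P_g,x} l t = K^{P_g,x} i t}. (This is the paper's Lemma 5: there is a port numbering such that, for every realization of positive probability given α, the dimension of every facet γ of the consistency projection satisfies g ∣ dim(γ) + 1.) -/
import Mathlib


open MeasureTheory Filter
open scoped ENNReal

/-- Message-passing knowledge values at time `t` (for `m = n - 1` ports): `init` at time `0`;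
at time `t+1` a knowledge value is the previous knowledge, the fresh random bit, and the
vector of the previous knowledge values received on the `m` ports. (This is the time-indexed
form of the inductive type `W` with constructors `init : W` and
`step : W → Bool → (Fin (n-1) → W) → W`.) -/
def MPW (m : ℕ) : ℕ → Type
  | 0 => PUnit
  | t + 1 => MPW m t × Bool × (Fin m → MPW m t)

/-- The message-passing knowledge `K^{P,x} i t` of node `i` at time `t`, given the port
assignment `P` and the bit sequences `x`: `K^{P,x} i 0 = init` and
`K^{P,x} i (t+1) = step (K^{P,x} i t) (x i t) (fun j => K^{P,x} (P i j) t)`. -/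
def mpK {n : ℕ} (P : Fin n → Fin (n - 1) → Fin n) (x : Fin n → ℕ → Bool) :
    Fin n → (t : ℕ) → MPW (n - 1) t
  | _, 0 => PUnit.unit
  | i, t + 1 => (mpK P x i t, x i t, fun j => mpK P x (P i j) t)

/-- `α : Fin n → Fin k` is the canonical configuration for fiber sizes `nn` if it sends `i`
to the unique `c` with `nn 0 + ⋯ + nn (c-1) ≤ i < nn 0 + ⋯ + nn c`. -/
def IsCanonical {n k : ℕ} (nn : Fin k → ℕ) (α : Fin n → Fin k) : Prop :=
  ∀ i : Fin n,
    (∑ c ∈ Finset.univ.filter (fun c => c < α i), nn c) ≤ (i : ℕ) ∧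
    (i : ℕ) < ∑ c ∈ Finset.univ.filter (fun c => c ≤ α i), nn c

theorem shift_lt {n g i : ℕ} (hg : 0 < g) (hgn : g ∣ n) (hi : i < n) :
    g * (i / g) + ((i % g + 1) % g) < n := by
  have h1 : (i % g + 1) % g < g := Nat.mod_lt _ hg
  have h2 : i / g < n / g := Nat.div_lt_div_of_lt_of_dvd hgn hi
  calc g * (i / g) + ((i % g + 1) % g)
      < g * (i / g) + g := by omega
    _ = g * (i / g + 1) := (Nat.mul_succ g _).symm
    _ ≤ g * (n / g) := Nat.mul_le_mul_left _ h2
    _ = n := Nat.mul_div_cancel' hgn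

/-- The shift permutation `f` of Lemma 5: `f i = g⌊i/g⌋ + ((i mod g + 1) mod g)`. -/
def shiftF (n g : ℕ) (hg : 0 < g) (hgn : g ∣ n) : Fin n → Fin n :=
  fun i => ⟨g * ((i : ℕ) / g) + (((i : ℕ) % g + 1) % g), shift_lt hg hgn i.isLt⟩

/-- The port assignment `P_g` of Lemma 5: node `i`'s port `j ∈ {1,…,n-1}` (represented by
`j : Fin (n-1)`, standing for the port number `(j : ℕ) + 1`) is connected to node
`((i + j) mod g + g⌊i/g⌋ + g⌊j/g⌋) mod n`. -/
def portG (n g : ℕ) (hn : 0 < n) : Fin n → Fin (n - 1) → Fin n :=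
  fun i j =>
    ⟨(((i : ℕ) + ((j : ℕ) + 1)) % g + g * ((i : ℕ) / g) + g * (((j : ℕ) + 1) / g)) % n,
      Nat.mod_lt _ hn⟩

theorem dvd_of_dvd_fibers {k n g : ℕ} (nn : Fin k → ℕ) (hsum : n = ∑ c, nn c)
    (hgdvd : ∀ c, g ∣ nn c) : g ∣ n :=
  hsum ▸ Finset.dvd_sum fun c _ => hgdvd c

lemma blocks_in_fibers {n k g : ℕ} (hg : 0 < g) (nn : Fin k → ℕ)
    (hgdvd : ∀ c, g ∣ nn c) (α : Fin n → Fin k) (hα : IsCanonical nn α)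
    {l l' : Fin n} (h : (l : ℕ) / g = (l' : ℕ) / g) : α l = α l' := by
  have key : ∀ m : Fin n, ∃ b a : ℕ,
      (∑ c ∈ Finset.univ.filter (fun c => c < α m), nn c) = g * b ∧
      (∑ c ∈ Finset.univ.filter (fun c => c ≤ α m), nn c) = g * a ∧
      b ≤ (m : ℕ) / g ∧ (m : ℕ) / g < a := by
    intro m
    obtain ⟨b, hb⟩ := Finset.dvd_sum (s := Finset.univ.filter (fun c => c < α m))
      (fun c _ => hgdvd c)
    obtain ⟨a, ha⟩ := Finset.dvd_sum (s := Finset.univ.filter (fun c => c ≤ α m))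
      (fun c _ => hgdvd c)
    obtain ⟨h1, h2⟩ := hα m
    refine ⟨b, a, hb, ha, ?_, ?_⟩
    · exact Nat.le_div_iff_mul_le hg |>.2 (by rw [Nat.mul_comm, ← hb]; exact h1)
    · exact (Nat.div_lt_iff_lt_mul hg).2 (by rw [Nat.mul_comm, ← ha]; exact h2)
  obtain ⟨b, a, hb, ha, h1, h2⟩ := key l
  obtain ⟨b', a', hb', ha', h1', h2'⟩ := key l'
  by_contra hne
  rcases lt_or_gt_of_ne hne with hlt | hlt
  · -- α l < α l' : A (α l) ≤ B (α l')
    have hsub : (Finset.univ.filter (fun c => c ≤ α l)) ⊆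
        (Finset.univ.filter (fun c => c < α l')) := by
      intro c hc
      simp only [Finset.mem_filter, Finset.mem_univ, true_and] at hc ⊢
      exact lt_of_le_of_lt hc hlt
    have := Finset.sum_le_sum_of_subset (f := nn) hsub
    rw [ha, hb'] at this
    have : a ≤ b' := Nat.le_of_mul_le_mul_left this hg
    omega
  · have hsub : (Finset.univ.filter (fun c => c ≤ α l')) ⊆
        (Finset.univ.filter (fun c => c < α l)) := by
      intro c hc
      simp only [Finset.mem_filter, Finset.mem_univ, true_and] at hc ⊢
      exact lt_of_le_of_lt hc hlt
    have := Finset.sum_le_sum_of_subset (f := nn) hsub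
    rw [ha', hb] at this
    have : a' ≤ b := Nat.le_of_mul_le_mul_left this hg
    omega

lemma mod_add_of_dvd {s m n g : ℕ} (hn : 0 < n) (hg : 0 < g) (hgn : g ∣ n)
    (hs : s < g) (hm : g ∣ m) : (s + m) % n = s + m % n ∧ (s + m % n) / g = m % n / g := by
  have hmn : g ∣ m % n := (Nat.dvd_mod_iff hgn).2 hm
  obtain ⟨e, he⟩ := hmn
  have hlt : m % n < n := Nat.mod_lt _ hn
  have hge : g * e + g ≤ n := by
    obtain ⟨f, hf⟩ := hgn
    have hef : e < f := by
      by_contra hc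
      push_neg at hc
      have := Nat.mul_le_mul_left g hc
      omega
    have h3 := Nat.mul_le_mul_left g hef
    have h4 := Nat.mul_succ g e
    omega
  have hgln : g ≤ n := Nat.le_of_dvd hn hgn
  constructor
  · rw [Nat.add_mod s m n, Nat.mod_eq_of_lt (show s < n by omega)]
    exact Nat.mod_eq_of_lt (by omega)
  · rw [he, Nat.add_mul_div_left _ _ hg, Nat.div_eq_of_lt hs, Nat.mul_div_cancel_left _ hg,
      Nat.zero_add]

lemma portG_div {n g : ℕ} (hn : 0 < n) (hg : 0 < g) (hgn : g ∣ n) (i : Fin n)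
    (j : Fin (n - 1)) :
    ((portG n g hn i j : ℕ)) / g = ((g * ((i : ℕ) / g) + g * (((j : ℕ) + 1) / g)) % n) / g := by
  have hs : ((i : ℕ) + ((j : ℕ) + 1)) % g < g := Nat.mod_lt _ hg
  obtain ⟨h1, h2⟩ := mod_add_of_dvd hn hg hgn hs
    (Dvd.dvd.add (Dvd.intro _ rfl) (Dvd.intro _ rfl) :
      g ∣ g * ((i : ℕ) / g) + g * (((j : ℕ) + 1) / g))
  show ((((i : ℕ) + ((j : ℕ) + 1)) % g + g * ((i : ℕ) / g) + g * (((j : ℕ) + 1) / g)) % n) / g = _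
  rw [Nat.add_assoc, h1, h2]

lemma mpK_block {n k g : ℕ} (hn : 0 < n) (hg : 0 < g) (hgn : g ∣ n)
    (nn : Fin k → ℕ) (hgdvd : ∀ c, g ∣ nn c) (α : Fin n → Fin k) (hα : IsCanonical nn α)
    (x : Fin n → ℕ → Bool) (hx : ∀ i j, α i = α j → x i = x j) :
    ∀ (t : ℕ) (l l' : Fin n), (l : ℕ) / g = (l' : ℕ) / g →
      mpK (portG n g hn) x l t = mpK (portG n g hn) x l' t := by
  intro t
  induction t with
  | zero => intro l l' _; rfl
  | succ t ih =>
    intro l l' h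
    show ((mpK (portG n g hn) x l t, x l t, fun j => mpK (portG n g hn) x (portG n g hn l j) t)
        : MPW (n-1) (t+1)) = (mpK (portG n g hn) x l' t, x l' t,
          fun j => mpK (portG n g hn) x (portG n g hn l' j) t)
    have hxll : x l = x l' := hx l l' (blocks_in_fibers hg nn hgdvd α hα h)
    refine Prod.ext (ih l l' h) (Prod.ext (by rw [hxll]) ?_)
    funext j
    refine ih _ _ ?_
    rw [portG_div hn hg hgn, portG_div hn hg hgn, h]

lemma block_card {n g : ℕ} (hg : 0 < g) (hgn : g ∣ n) (q : ℕ) (hq : g * q + g ≤ n) :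
    (Finset.univ.filter (fun m : Fin n => (m : ℕ) / g = q)).card = g := by
  have key := Finset.card_bij'
    (s := Finset.univ.filter (fun m : Fin n => (m : ℕ) / g = q))
    (t := (Finset.univ : Finset (Fin g)))
    (i := fun m _ => (⟨(m : ℕ) % g, Nat.mod_lt _ hg⟩ : Fin g))
    (j := fun r _ => (⟨g * q + (r : ℕ), by omega⟩ : Fin n))
    ?_ ?_ ?_ ?_
  · rw [key, Finset.card_univ, Fintype.card_fin]
  · intro a _; exact Finset.mem_univ _
  · intro r _
    simp only [Finset.mem_filter, Finset.mem_univ, true_and]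
    show (g * q + (r : ℕ)) / g = q
    rw [Nat.mul_add_div hg, Nat.div_eq_of_lt r.isLt, Nat.add_zero]
  · intro m hm
    simp only [Finset.mem_filter, Finset.mem_univ, true_and] at hm
    apply Fin.ext
    show g * q + (m : ℕ) % g = (m : ℕ)
    rw [← hm]
    exact Nat.div_add_mod _ _
  · intro r _
    apply Fin.ext
    show (g * q + (r : ℕ)) % g = (r : ℕ)
    rw [Nat.mul_add_mod, Nat.mod_eq_of_lt r.isLt]


/-- **Lemma 5.** If `g ≥ 1` divides every fiber size `n_c`, then with the canonical
configuration `α` and the port assignment `P_g`, for every `x` compatible with `α`, every time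
`t` and every node `i`, the size of the consistency class of `i` (the set of nodes with the
same knowledge as `i` at time `t`) is divisible by `g`. -/
theorem port_assignment_consistency_class_dvd (n k g : ℕ) (hn : 2 ≤ n)
    (nn : Fin k → ℕ) (hnn : ∀ c, 1 ≤ nn c) (hsum : n = ∑ c, nn c)
    (hg : 0 < g) (hgdvd : ∀ c, g ∣ nn c)
    (α : Fin n → Fin k) (hα : IsCanonical nn α)
    (x : Fin n → ℕ → Bool) (hx : ∀ i j, α i = α j → x i = x j) :
    ∀ (t : ℕ) (i : Fin n),
      g ∣ {l : Fin n |
        mpK (portG n g (by omega)) x l t = mpK (portG n g (by omega)) x i t}.ncard := by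
  classical
  intro t i
  have hn0 : 0 < n := by omega
  have hgn : g ∣ n := hsum ▸ Finset.dvd_sum fun c _ => hgdvd c
  set P := portG n g (show 0 < n by omega) with hP
  have hset : {l : Fin n | mpK P x l t = mpK P x i t} =
      ↑(Finset.univ.filter (fun l : Fin n => mpK P x l t = mpK P x i t)) := by
    ext l; simp
  rw [hset, Set.ncard_coe_finset]
  set F := Finset.univ.filter (fun l : Fin n => mpK P x l t = mpK P x i t) with hF
  rw [Finset.card_eq_sum_card_fiberwise
    (f := fun l : Fin n => (l : ℕ) / g) (t := F.image (fun l : Fin n => (l : ℕ) / g))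
    (fun l hl => Finset.mem_image_of_mem _ hl)]
  refine Finset.dvd_sum fun q hq => ?_
  obtain ⟨l, hlF, hlq⟩ := Finset.mem_image.1 hq
  have hfiber : F.filter (fun l : Fin n => (l : ℕ) / g = q) =
      Finset.univ.filter (fun m : Fin n => (m : ℕ) / g = q) := by
    ext m
    simp only [hF, Finset.mem_filter, Finset.mem_univ, true_and]
    refine ⟨fun h => h.2, fun h => ⟨?_, h⟩⟩
    have := mpK_block hn0 hg hgn nn hgdvd α hα x hx t m l (by rw [h, hlq])
    have hlK : mpK P x l t = mpK P x i t := by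
      rw [hF] at hlF; exact (Finset.mem_filter.1 hlF).2
    rw [this]; exact hlK
  rw [hfiber, block_card hg hgn q ?_]
  · rw [← hlq]
    have h1 : (l : ℕ) < n := l.isLt
    obtain ⟨f, hf⟩ := hgn
    have h2 : (l : ℕ) / g < f := by
      apply (Nat.div_lt_iff_lt_mul hg).2
      rw [Nat.mul_comm]; omega
    have h3 := Nat.mul_succ g ((l : ℕ) / g)
    have h4 := Nat.mul_le_mul_left g h2
    omega
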